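/- Perturbative comparison of measurement dynamics: let (Φ^{(k)}_{ξ_1,…,ξ_k}) and (Φ̃_ξ) be trace-nonincreasing completely positive maps on trace-class operators over a finite-dimensional H, such that (i) ‖Φ^{(k)}_{…,ξ} − Φ̃_ξ‖ ≤ d₁‖Φ̃_ξ‖ and (ii) Tr(Φ̃_ξ[ρ]) ≥ d₂‖Φ̃_ξ‖ for all density matrices ρ, with 0 ≤ d₁ < d₂ ≤ 1 and d := d₂−d₁ < 1. Then for all trace-class ρ₁, ρ₂: ‖Φ^{(n)}_{…,ξ_n}[ρ₁] − Φ̃_{ξ_n}[ρ₂]‖ ≤ ‖Φ̃_{ξ_n}‖(d₁‖ρ₁‖ + ‖ρ₁−ρ₂‖), and iterating, for any density matrix ρ̂ and any length-r protocol, ‖Φ^{(k+r)}∘⋯∘Φ^{(k+1)}[ρ̂] − Φ̃_{ξ_r}∘⋯∘Φ̃_{ξ_1}[ρ̂]‖ ≤ (d₁/(d^{-1}−1))·d^{-r-1}·Tr(Φ^{(k+r)}∘⋯∘Φ^{(k+1)}[ρ̂]). -/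

import Mathlib

open Matrix
open scoped BigOperators ComplexOrder

/-- The trace norm `‖A‖₁ = Tr √(AᴴA)` of a complex matrix. -/
noncomputable def traceNorm {m : Type*} [Fintype m] [DecidableEq m] (A : Matrix m m ℂ) : ℝ :=
  (((Matrix.posSemidef_conjTranspose_mul_self A).1.eigenvectorUnitary : Matrix m m ℂ) *
      diagonal ((fun x : ℝ => (x : ℂ)) ∘ (Real.sqrt ·) ∘ (Matrix.posSemidef_conjTranspose_mul_self A).1.eigenvalues) *
      (star (Matrix.posSemidef_conjTranspose_mul_self A).1.eigenvectorUnitary : Matrix m m ℂ)).trace.re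

/-- The operator norm of a linear map on matrices, with respect to the trace norm. -/
noncomputable def traceMapNorm {m : Type*} [Fintype m] [DecidableEq m]
    (Φ : Matrix m m ℂ →ₗ[ℂ] Matrix m m ℂ) : ℝ :=
  sSup {r | ∃ X : Matrix m m ℂ, traceNorm X ≤ 1 ∧ r = traceNorm (Φ X)}

/-- A linear map on matrices is completely positive if all its finite amplifications
`Φ ⊗ id_n` preserve positive semidefiniteness. -/
def IsCompletelyPositive {m : Type*} [Fintype m] [DecidableEq m]
    (Φ : Matrix m m ℂ →ₗ[ℂ] Matrix m m ℂ) : Prop :=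
  ∀ (n : ℕ) (A : Matrix (m × Fin n) (m × Fin n) ℂ), A.PosSemidef →
    (Matrix.of fun p q : m × Fin n =>
      Φ (Matrix.of fun a b => A (a, p.2) (b, q.2)) p.1 q.1).PosSemidef

/-- The true (protocol-dependent) dynamics applied along the protocol segment `ξl`, given
the previous protocol `η`: `ρ̂(ξ^{(r)} | η^{(k)}) = Φ^{(k+r)} ∘ ⋯ ∘ Φ^{(k+1)} [ρ̂]`, where
`Φ^{(j)}` may depend on the whole protocol up to step `j` (here encoded as a list). -/
def chain {σ m : Type*} [Fintype m] [DecidableEq m]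
    (Φ : List σ → (Matrix m m ℂ →ₗ[ℂ] Matrix m m ℂ)) :
    List σ → List σ → Matrix m m ℂ → Matrix m m ℂ
  | _, [], ρ => ρ
  | η, ξ :: t, ρ => chain Φ (η ++ [ξ]) t (Φ (η ++ [ξ]) ρ)

/-- The non-demolition comparison dynamics `Φ̃_{ξ_r} ∘ ⋯ ∘ Φ̃_{ξ_1} [ρ̂]` along the
protocol segment `ξl = (ξ_1, …, ξ_r)`. -/
def tchain {σ m : Type*} [Fintype m] [DecidableEq m]
    (Φt : σ → (Matrix m m ℂ →ₗ[ℂ] Matrix m m ℂ)) :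
    List σ → Matrix m m ℂ → Matrix m m ℂ
  | [], ρ => ρ
  | ξ :: t, ρ => tchain Φt t (Φt ξ ρ)

/-!
Splitting `Φ ρ₁ - Φ̃ ρ₂ = (Φ - Φ̃) ρ₁ + Φ̃ (ρ₁ - ρ₂)` gives the one-step estimate by the triangle
inequality. On positive `ρ`, (i) and (ii) give the lower bound `Tr Φ[ρ] ≥ d ‖Φ̃‖ Tr ρ`, so the
error `e_r` of the comparison after `r` steps and the trace `T_r` of the true evolution satisfy
`e_{r+1} ≤ ‖Φ̃‖ (d₁ + c_r) T_r ≤ (d₁ + c_r) / d · T_{r+1}` whenever `e_r ≤ c_r T_r`; here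
complete positivity keeps the evolved state positive, so its trace norm is its trace `T_r`.
Solving `c_{r+1} = (d₁ + c_r) / d`, `c_0 = 0` gives `c_r ≤ d₁ / (d⁻¹ - 1) · d^{-r-1}`.

The trace norm `‖A‖₁ = Tr |A|` is controlled by duality with the operator norm:
`|Tr (B A)| ≤ ‖B‖ ‖A‖₁`, with equality for a contraction `B` obtained from the polar
decomposition of `A`; this yields the triangle inequality.
-/

open scoped MatrixOrder Matrix.Norms.L2Operator InnerProductSpace

section TraceNorm

variable {m : Type*} [Fintype m] [DecidableEq m]

lemma traceNorm_eq_re_trace_abs (A : Matrix m m ℂ) : traceNorm A = (CFC.abs A).trace.re := by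
  have hA := posSemidef_conjTranspose_mul_self A
  rw [CFC.abs, star_eq_conjTranspose, CFC.sqrt_eq_real_sqrt _ hA.nonneg, cfcₙ_eq_cfc, hA.1.cfc_eq,
    IsHermitian.cfc, Unitary.conjStarAlgAut_apply]
  rfl

lemma traceNorm_eq_sum_sqrt_eigenvalues (A : Matrix m m ℂ) :
    traceNorm A = ∑ i, √((posSemidef_conjTranspose_mul_self A).1.eigenvalues i) := by
  rw [traceNorm, trace_mul_cycle, Unitary.coe_star_mul_self, one_mul, trace_diagonal,
    Complex.re_sum]
  simp

lemma traceNorm_nonneg (A : Matrix m m ℂ) : 0 ≤ traceNorm A := by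
  rw [traceNorm_eq_sum_sqrt_eigenvalues]
  positivity

@[simp]
lemma traceNorm_zero : traceNorm (0 : Matrix m m ℂ) = 0 := by
  rw [traceNorm_eq_re_trace_abs, CFC.abs_zero, trace_zero, Complex.zero_re]

lemma traceNorm_smul (c : ℂ) (A : Matrix m m ℂ) : traceNorm (c • A) = ‖c‖ * traceNorm A := by
  rw [traceNorm_eq_re_trace_abs, traceNorm_eq_re_trace_abs, CFC.abs_smul, trace_smul]
  simp

lemma Matrix.PosSemidef.traceNorm_eq {A : Matrix m m ℂ} (hA : A.PosSemidef) :
    traceNorm A = A.trace.re := by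
  rw [traceNorm_eq_re_trace_abs, CFC.abs_of_nonneg A hA.nonneg]

lemma Matrix.trace_eq_sum_inner_toEuclideanCLM {ι : Type*} [Fintype ι] (M : Matrix m m ℂ)
    (b : OrthonormalBasis ι ℂ (EuclideanSpace ℂ m)) :
    M.trace = ∑ i, ⟪b i, toEuclideanCLM (𝕜 := ℂ) M (b i)⟫_ℂ := by
  have h := LinearMap.trace_eq_sum_inner (toEuclideanCLM (𝕜 := ℂ) M : EuclideanSpace ℂ m →ₗ[ℂ] _) b
  rwa [coe_toEuclideanCLM_eq_toEuclideanLin, toEuclideanLin_eq_toLin_orthonormal,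
    trace_toLin_eq] at h

lemma Matrix.IsHermitian.toEuclideanCLM_eigenvectorBasis {M : Matrix m m ℂ} (hM : M.IsHermitian)
    (i : m) :
    toEuclideanCLM (𝕜 := ℂ) M (hM.eigenvectorBasis i) =
      (hM.eigenvalues i : ℂ) • hM.eigenvectorBasis i := by
  ext1
  rw [ofLp_toEuclideanCLM, hM.mulVec_eigenvectorBasis, WithLp.ofLp_smul,
    RCLike.real_smul_eq_coe_smul (K := ℂ)]
  rfl

lemma Matrix.IsHermitian.star_eigenvectorUnitary_mul_mul_eigenvectorUnitary {M : Matrix m m ℂ}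
    (hM : M.IsHermitian) :
    star (hM.eigenvectorUnitary : Matrix m m ℂ) * M * hM.eigenvectorUnitary =
      diagonal (fun i => (hM.eigenvalues i : ℂ)) := by
  have h := hM.conjStarAlgAut_star_eigenvectorUnitary
  rwa [Unitary.conjStarAlgAut_star_apply] at h

lemma norm_toEuclideanCLM_eigenvectorBasis (A : Matrix m m ℂ) (i : m) :
    ‖toEuclideanCLM (𝕜 := ℂ) A ((posSemidef_conjTranspose_mul_self A).1.eigenvectorBasis i)‖ =
      √((posSemidef_conjTranspose_mul_self A).1.eigenvalues i) := by
  set hA := posSemidef_conjTranspose_mul_self A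
  rw [eq_comm, Real.sqrt_eq_iff_eq_sq (hA.eigenvalues_nonneg i) (norm_nonneg _),
    @norm_sq_eq_re_inner ℂ, ← ContinuousLinearMap.adjoint_inner_right,
    ← ContinuousLinearMap.star_eq_adjoint, ← map_star, ← ContinuousLinearMap.comp_apply,
    ← ContinuousLinearMap.mul_def, ← map_mul, star_eq_conjTranspose,
    hA.1.toEuclideanCLM_eigenvectorBasis, inner_smul_right, inner_self_eq_norm_sq_to_K,
    hA.1.eigenvectorBasis.orthonormal.1 i]
  simp

lemma norm_trace_mul_le (A B : Matrix m m ℂ) : ‖(B * A).trace‖ ≤ ‖B‖ * traceNorm A := by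
  set b := (posSemidef_conjTranspose_mul_self A).1.eigenvectorBasis
  rw [trace_eq_sum_inner_toEuclideanCLM _ b, traceNorm_eq_sum_sqrt_eigenvalues, Finset.mul_sum]
  refine (norm_sum_le _ _).trans (Finset.sum_le_sum fun i _ => ?_)
  rw [← norm_toEuclideanCLM_eigenvectorBasis, map_mul, ContinuousLinearMap.mul_def,
    ContinuousLinearMap.comp_apply, cstar_norm_def B]
  calc _ ≤ ‖b i‖ * ‖toEuclideanCLM (𝕜 := ℂ) B (toEuclideanCLM (𝕜 := ℂ) A (b i))‖ :=
        norm_inner_le_norm _ _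
    _ ≤ 1 * (‖toEuclideanCLM (𝕜 := ℂ) B‖ * ‖toEuclideanCLM (𝕜 := ℂ) A (b i)‖) := by
        rw [b.orthonormal.1 i]
        gcongr
        exact ContinuousLinearMap.le_opNorm _ _
    _ = _ := one_mul _

lemma exists_norm_le_one_trace_mul_eq_traceNorm (A : Matrix m m ℂ) :
    ∃ B : Matrix m m ℂ, ‖B‖ ≤ 1 ∧ (B * A).trace = traceNorm A := by
  set hA := (posSemidef_conjTranspose_mul_self A).1
  set V : Matrix m m ℂ := ↑hA.eigenvectorUnitary
  set s : m → ℝ := fun i => √(hA.eigenvalues i)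
  -- `(s i)⁻¹ = 0` where `s i = 0`, so `V * D * star V * Aᴴ` is the adjoint of the partial
  -- isometry in the polar decomposition of `A`.
  set D : Matrix m m ℂ := diagonal (fun i => ((s i)⁻¹ : ℝ))
  have hspec : star V * (Aᴴ * A) * V = diagonal (fun i => ((s i ^ 2 : ℝ) : ℂ)) := by
    rw [hA.star_eigenvectorUnitary_mul_mul_eigenvectorUnitary]
    congr! 3 with i
    exact (Real.sq_sqrt ((posSemidef_conjTranspose_mul_self A).eigenvalues_nonneg i)).symm
  refine ⟨V * (D * star V * Aᴴ), ?_, ?_⟩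
  · set X := D * star V * Aᴴ
    have hX : X * star X = diagonal (fun i => ((((s i)⁻¹ * s i) ^ 2 : ℝ) : ℂ)) := by
      have hD : star D = D := by simp [D, star_eq_conjTranspose, diagonal_conjTranspose]
      calc X * star X = D * (star V * (Aᴴ * A) * V) * star D := by
            simp only [X, star_mul, star_eq_conjTranspose, conjTranspose_conjTranspose, mul_assoc]
        _ = _ := by
            rw [hspec, hD, diagonal_mul_diagonal, diagonal_mul_diagonal]
            congr! 2 with i
            push_cast
            ring
    have hX1 : ‖X‖ * ‖X‖ ≤ 1 := by
      rw [← CStarRing.norm_self_mul_star, hX, l2_opNorm_diagonal]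
      refine pi_norm_le_iff_of_nonneg zero_le_one |>.mpr fun i => ?_
      rcases eq_or_ne (s i) 0 with h | h <;> simp [h]
    rw [CStarRing.norm_coe_unitary_mul]
    nlinarith [norm_nonneg X]
  · calc (V * (D * star V * Aᴴ) * A).trace = (D * (star V * (Aᴴ * A) * V)).trace := by
          rw [mul_assoc, trace_mul_comm]
          simp only [mul_assoc]
      _ = traceNorm A := by
          rw [hspec, diagonal_mul_diagonal, trace_diagonal, traceNorm_eq_sum_sqrt_eigenvalues]
          push_cast
          refine Finset.sum_congr rfl fun i _ => ?_
          rcases eq_or_ne (s i) 0 with h | h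
          · simp [h, s]
          · field_simp
            rfl

lemma traceNorm_add_le (A B : Matrix m m ℂ) : traceNorm (A + B) ≤ traceNorm A + traceNorm B := by
  obtain ⟨C, hC, hCAB⟩ := exists_norm_le_one_trace_mul_eq_traceNorm (A + B)
  have hle (X : Matrix m m ℂ) : (C * X).trace.re ≤ traceNorm X :=
    (Complex.re_le_norm _).trans <| (norm_trace_mul_le X C).trans <|
      mul_le_of_le_one_left (traceNorm_nonneg X) hC
  have hsplit : traceNorm (A + B) = (C * A).trace.re + (C * B).trace.re := by
    rw [← Complex.add_re, ← trace_add, ← mul_add, hCAB, Complex.ofReal_re]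
  rw [hsplit]
  exact add_le_add (hle A) (hle B)

lemma traceNorm_sum_le {ι : Type*} (s : Finset ι) (f : ι → Matrix m m ℂ) :
    traceNorm (∑ i ∈ s, f i) ≤ ∑ i ∈ s, traceNorm (f i) :=
  Finset.le_sum_of_subadditive traceNorm traceNorm_zero.le traceNorm_add_le s f

lemma norm_trace_le_traceNorm (A : Matrix m m ℂ) : ‖A.trace‖ ≤ traceNorm A := by
  have h1 : ‖(1 : Matrix m m ℂ)‖ ≤ 1 := by
    rw [← diagonal_one, l2_opNorm_diagonal]
    exact pi_norm_le_iff_of_nonneg zero_le_one |>.mpr fun i => by simp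
  simpa using (norm_trace_mul_le A 1).trans (mul_le_of_le_one_left (traceNorm_nonneg A) h1)

lemma Matrix.norm_single_one_le (i j : m) : ‖(single i j 1 : Matrix m m ℂ)‖ ≤ 1 := by
  have h : ‖(single i j 1 : Matrix m m ℂ)‖ * ‖(single i j 1 : Matrix m m ℂ)‖ ≤ 1 := by
    rw [← CStarRing.norm_star_mul_self, star_eq_conjTranspose, conjTranspose_single,
      single_mul_single_same, ← diagonal_single, l2_opNorm_diagonal]
    refine pi_norm_le_iff_of_nonneg zero_le_one |>.mpr fun k => ?_
    rcases eq_or_ne k j with rfl | h <;> simp [*]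
  nlinarith [norm_nonneg (single i j 1 : Matrix m m ℂ)]

lemma norm_apply_le_traceNorm (A : Matrix m m ℂ) (i j : m) : ‖A i j‖ ≤ traceNorm A := by
  simpa [trace_single_mul] using (norm_trace_mul_le A (single j i 1)).trans
    (mul_le_of_le_one_left (traceNorm_nonneg A) (norm_single_one_le j i))

lemma eq_zero_of_traceNorm_eq_zero {A : Matrix m m ℂ} (h : traceNorm A = 0) : A = 0 := by
  ext i j
  simpa [h] using norm_apply_le_traceNorm A i j

end TraceNorm

section TraceMapNorm

variable {m : Type*} [Fintype m] [DecidableEq m] (Φ : Matrix m m ℂ →ₗ[ℂ] Matrix m m ℂ)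

lemma bddAbove_traceNorm_image_unitBall :
    BddAbove {r | ∃ X : Matrix m m ℂ, traceNorm X ≤ 1 ∧ r = traceNorm (Φ X)} := by
  refine ⟨∑ i, ∑ j, traceNorm (Φ (single i j 1)), ?_⟩
  rintro r ⟨X, hX, rfl⟩
  have hΦX : Φ X = ∑ i, ∑ j, X i j • Φ (single i j 1) := by
    conv_lhs => rw [matrix_eq_sum_single X]
    simp only [map_sum, ← map_smul, smul_single, smul_eq_mul, mul_one]
  rw [hΦX]
  refine (traceNorm_sum_le _ _).trans (Finset.sum_le_sum fun i _ => ?_)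
  refine (traceNorm_sum_le _ _).trans (Finset.sum_le_sum fun j _ => ?_)
  rw [traceNorm_smul]
  exact mul_le_of_le_one_left (traceNorm_nonneg _) ((norm_apply_le_traceNorm X i j).trans hX)

lemma traceMapNorm_nonneg : 0 ≤ traceMapNorm Φ :=
  le_csSup (bddAbove_traceNorm_image_unitBall Φ) ⟨0, by simp, by simp⟩

lemma traceNorm_apply_le (X : Matrix m m ℂ) : traceNorm (Φ X) ≤ traceMapNorm Φ * traceNorm X := by
  rcases eq_or_ne (traceNorm X) 0 with h | h
  · simp [eq_zero_of_traceNorm_eq_zero h]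
  have ht : 0 < traceNorm X := (traceNorm_nonneg X).lt_of_ne' h
  have hnorm : ‖((traceNorm X)⁻¹ : ℂ)‖ = (traceNorm X)⁻¹ := by
    rw [← Complex.ofReal_inv, Complex.norm_real, Real.norm_of_nonneg (inv_nonneg.mpr ht.le)]
  have hunit : (traceNorm X)⁻¹ * traceNorm (Φ X) ≤ traceMapNorm Φ := by
    refine le_csSup (bddAbove_traceNorm_image_unitBall Φ) ⟨((traceNorm X)⁻¹ : ℂ) • X, ?_, ?_⟩
    · rw [traceNorm_smul, hnorm, inv_mul_cancel₀ h]
    · rw [map_smul, traceNorm_smul, hnorm]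
  rwa [inv_mul_le_iff₀ ht, mul_comm] at hunit

end TraceMapNorm

lemma mul_re_trace_le_re_trace_apply {m : Type*} [Fintype m]
    (Ψ : Matrix m m ℂ →ₗ[ℂ] Matrix m m ℂ) {c : ℝ}
    (h : ∀ ρ : Matrix m m ℂ, ρ.PosSemidef → ρ.trace = 1 → c ≤ (Ψ ρ).trace.re)
    {ρ : Matrix m m ℂ} (hρ : ρ.PosSemidef) : c * ρ.trace.re ≤ (Ψ ρ).trace.re := by
  set t := ρ.trace.re
  have htr : ρ.trace = t := Complex.eq_re_of_ofReal_le (r := 0) (by simpa using hρ.trace_nonneg)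
  rcases eq_or_ne t 0 with h0 | h0
  · rw [h0, mul_zero, hρ.trace_eq_zero_iff.mp (by simp [htr, h0]), map_zero, trace_zero,
      Complex.zero_re]
  have hpos : 0 < t := (Complex.nonneg_iff.mp hρ.trace_nonneg).1.lt_of_ne' h0
  have hdensity := h ((t⁻¹ : ℂ) • ρ) (hρ.smul (by simpa using hpos.le)) <| by
    rw [trace_smul, htr, smul_eq_mul, ← Complex.ofReal_inv, ← Complex.ofReal_mul,
      inv_mul_cancel₀ h0, Complex.ofReal_one]
  rwa [map_smul, trace_smul, smul_eq_mul, ← Complex.ofReal_inv, Complex.re_ofReal_mul,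
    le_inv_mul_iff₀ hpos, mul_comm] at hdensity

lemma IsCompletelyPositive.posSemidef_apply {m : Type*} [Fintype m] [DecidableEq m]
    {Φ : Matrix m m ℂ →ₗ[ℂ] Matrix m m ℂ} (hΦ : IsCompletelyPositive Φ) {ρ : Matrix m m ℂ}
    (hρ : ρ.PosSemidef) : (Φ ρ).PosSemidef :=
  (hΦ 1 _ (hρ.submatrix Prod.fst)).submatrix fun a => (a, 0)

section Comparison

variable {m : Type*} [Fintype m] [DecidableEq m]

lemma traceNorm_apply_sub_apply_le (Ψ Ψt : Matrix m m ℂ →ₗ[ℂ] Matrix m m ℂ) {d₁ : ℝ}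
    (hi : traceMapNorm (Ψ - Ψt) ≤ d₁ * traceMapNorm Ψt) (ρ₁ ρ₂ : Matrix m m ℂ) :
    traceNorm (Ψ ρ₁ - Ψt ρ₂) ≤ traceMapNorm Ψt * (d₁ * traceNorm ρ₁ + traceNorm (ρ₁ - ρ₂)) := by
  have hsplit : Ψ ρ₁ - Ψt ρ₂ = (Ψ - Ψt) ρ₁ + Ψt (ρ₁ - ρ₂) := by
    simp only [LinearMap.sub_apply, map_sub]
    abel
  calc traceNorm (Ψ ρ₁ - Ψt ρ₂)
      ≤ traceMapNorm (Ψ - Ψt) * traceNorm ρ₁ + traceMapNorm Ψt * traceNorm (ρ₁ - ρ₂) := by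
        rw [hsplit]
        exact (traceNorm_add_le _ _).trans
          (add_le_add (traceNorm_apply_le _ _) (traceNorm_apply_le _ _))
    _ ≤ d₁ * traceMapNorm Ψt * traceNorm ρ₁ + traceMapNorm Ψt * traceNorm (ρ₁ - ρ₂) := by
        gcongr
        exact traceNorm_nonneg _
    _ = _ := by ring

lemma sub_mul_re_trace_le_re_trace_apply (Ψ Ψt : Matrix m m ℂ →ₗ[ℂ] Matrix m m ℂ) {d₁ d₂ : ℝ}
    (hi : traceMapNorm (Ψ - Ψt) ≤ d₁ * traceMapNorm Ψt)
    (hii : ∀ ρ : Matrix m m ℂ, ρ.PosSemidef → ρ.trace = 1 →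
      d₂ * traceMapNorm Ψt ≤ (Ψt ρ).trace.re)
    {ρ : Matrix m m ℂ} (hρ : ρ.PosSemidef) :
    (d₂ - d₁) * traceMapNorm Ψt * ρ.trace.re ≤ (Ψ ρ).trace.re := by
  have hmain := mul_re_trace_le_re_trace_apply Ψt hii hρ
  have herr : traceNorm ((Ψ - Ψt) ρ) ≤ d₁ * traceMapNorm Ψt * ρ.trace.re := by
    rw [← hρ.traceNorm_eq]
    exact (traceNorm_apply_le _ _).trans (by gcongr; exact traceNorm_nonneg ρ)
  have hre : -traceNorm ((Ψ - Ψt) ρ) ≤ ((Ψ - Ψt) ρ).trace.re :=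
    neg_le_of_abs_le ((Complex.abs_re_le_norm _).trans (norm_trace_le_traceNorm _))
  have hsplit : (Ψ ρ).trace.re = (Ψt ρ).trace.re + ((Ψ - Ψt) ρ).trace.re := by simp
  linarith

end Comparison

section Protocol

variable {m σ : Type*} [Fintype m] [DecidableEq m] (Φ : List σ → (Matrix m m ℂ →ₗ[ℂ] Matrix m m ℂ))
  (Φt : σ → (Matrix m m ℂ →ₗ[ℂ] Matrix m m ℂ))

lemma chain_append_singleton (η t : List σ) (ξ : σ) (ρ : Matrix m m ℂ) :
    chain Φ η (t ++ [ξ]) ρ = Φ (η ++ t ++ [ξ]) (chain Φ η t ρ) := by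
  induction t generalizing η ρ with
  | nil => simp [chain]
  | cons a t ih => simp [chain, ih]

lemma tchain_append_singleton (t : List σ) (ξ : σ) (ρ : Matrix m m ℂ) :
    tchain Φt (t ++ [ξ]) ρ = Φt ξ (tchain Φt t ρ) := by
  induction t generalizing ρ with
  | nil => rfl
  | cons a t ih => exact ih _

lemma chain_posSemidef (hΦ : ∀ l, IsCompletelyPositive (Φ l)) (η t : List σ)
    {ρ : Matrix m m ℂ} (hρ : ρ.PosSemidef) : (chain Φ η t ρ).PosSemidef := by
  induction t generalizing η ρ with
  | nil => exact hρ
  | cons a t ih => exact ih _ ((hΦ _).posSemidef_apply hρ)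

end Protocol

noncomputable def comparisonCoeff (d₁ d : ℝ) (r : ℕ) : ℝ :=
  d₁ / (d⁻¹ - 1) * ((d ^ (r + 1))⁻¹ - d⁻¹)

section ComparisonCoeff

variable {d₁ d : ℝ}

@[simp]
lemma comparisonCoeff_zero : comparisonCoeff d₁ d 0 = 0 := by simp [comparisonCoeff]

lemma mul_comparisonCoeff_succ (hd0 : d ≠ 0) (hd1 : d ≠ 1) (r : ℕ) :
    d * comparisonCoeff d₁ d (r + 1) = d₁ + comparisonCoeff d₁ d r := by
  have h : d⁻¹ - 1 ≠ 0 := sub_ne_zero.mpr (inv_ne_one.mpr hd1)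
  unfold comparisonCoeff
  field_simp
  ring

lemma div_inv_sub_one_nonneg (hd₁ : 0 ≤ d₁) (hd0 : 0 < d) (hd1 : d < 1) : 0 ≤ d₁ / (d⁻¹ - 1) :=
  div_nonneg hd₁ (sub_nonneg.mpr (one_le_inv₀ hd0 |>.mpr hd1.le))

lemma comparisonCoeff_nonneg (hd₁ : 0 ≤ d₁) (hd0 : 0 < d) (hd1 : d < 1) (r : ℕ) :
    0 ≤ comparisonCoeff d₁ d r :=
  mul_nonneg (div_inv_sub_one_nonneg hd₁ hd0 hd1) <| sub_nonneg.mpr <|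
    inv_anti₀ (pow_pos hd0 _) (pow_le_of_le_one hd0.le hd1.le r.succ_ne_zero)

lemma comparisonCoeff_le (hd₁ : 0 ≤ d₁) (hd0 : 0 < d) (hd1 : d < 1) (r : ℕ) :
    comparisonCoeff d₁ d r ≤ d₁ / (d⁻¹ - 1) * d ^ (-(r : ℝ) - 1) := by
  have hrpow : d ^ (-(r : ℝ) - 1) = (d ^ (r + 1))⁻¹ := by
    rw [← Real.rpow_natCast, ← Real.rpow_neg hd0.le]
    push_cast
    ring_nf
  rw [hrpow]
  exact mul_le_mul_of_nonneg_left (sub_le_self _ (inv_nonneg.mpr hd0.le))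
    (div_inv_sub_one_nonneg hd₁ hd0 hd1)

end ComparisonCoeff

theorem traceNorm_chain_sub_tchain_le {m σ : Type*} [Fintype m] [DecidableEq m]
    (Φ : List σ → (Matrix m m ℂ →ₗ[ℂ] Matrix m m ℂ)) (Φt : σ → (Matrix m m ℂ →ₗ[ℂ] Matrix m m ℂ))
    (hCP : ∀ l, IsCompletelyPositive (Φ l)) (N : σ → ℝ) (hN : ∀ ξ, 0 ≤ N ξ) {d₁ d : ℝ}
    (hd₁ : 0 ≤ d₁) (hd0 : 0 < d) (hd1 : d < 1)
    (hstep : ∀ (l : List σ) (ξ : σ) (ρ₁ ρ₂ : Matrix m m ℂ),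
      traceNorm (Φ (l ++ [ξ]) ρ₁ - Φt ξ ρ₂) ≤ N ξ * (d₁ * traceNorm ρ₁ + traceNorm (ρ₁ - ρ₂)))
    (hlow : ∀ (l : List σ) (ξ : σ) (ρ : Matrix m m ℂ), ρ.PosSemidef →
      d * N ξ * ρ.trace.re ≤ (Φ (l ++ [ξ]) ρ).trace.re)
    (η ξl : List σ) {ρ : Matrix m m ℂ} (hρ : ρ.PosSemidef) :
    traceNorm (chain Φ η ξl ρ - tchain Φt ξl ρ) ≤
      comparisonCoeff d₁ d ξl.length * (chain Φ η ξl ρ).trace.re := by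
  induction ξl using List.reverseRecOn with
  | nil => simp [chain, tchain]
  | append_singleton t ξ ih =>
    rw [chain_append_singleton, tchain_append_singleton, List.length_append,
      List.length_singleton]
    have hpsd := chain_posSemidef Φ hCP η t hρ
    set T := (chain Φ η t ρ).trace.re
    calc _ ≤ N ξ * (d₁ * T + comparisonCoeff d₁ d t.length * T) := by
          refine (hstep _ ξ _ _).trans ?_
          rw [hpsd.traceNorm_eq]
          gcongr
          exact hN ξ
      _ = comparisonCoeff d₁ d (t.length + 1) * (d * N ξ * T) := by
          linear_combination
            (-(N ξ * T)) * mul_comparisonCoeff_succ (d₁ := d₁) hd0.ne' hd1.ne t.length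
      _ ≤ _ := by
          gcongr
          · exact comparisonCoeff_nonneg hd₁ hd0 hd1 _
          · exact hlow _ ξ _ hpsd

theorem perturbative_comparison_general {σ m : Type*} [Fintype m] [DecidableEq m]
    (Φ : List σ → (Matrix m m ℂ →ₗ[ℂ] Matrix m m ℂ))
    (Φt : σ → (Matrix m m ℂ →ₗ[ℂ] Matrix m m ℂ))
    (hCP : ∀ l, IsCompletelyPositive (Φ l))
    (d₁ d₂ : ℝ) (hd₁0 : 0 ≤ d₁) (hd₁₂ : d₁ < d₂)
    (hdlt : d₂ - d₁ < 1)
    (hi : ∀ (l : List σ) (ξ : σ),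
      traceMapNorm (Φ (l ++ [ξ]) - Φt ξ) ≤ d₁ * traceMapNorm (Φt ξ))
    (hii : ∀ (ξ : σ) (ρ : Matrix m m ℂ), ρ.PosSemidef → ρ.trace = 1 →
      d₂ * traceMapNorm (Φt ξ) ≤ ((Φt ξ ρ).trace).re) :
    (∀ (l : List σ) (ξ : σ) (ρ₁ ρ₂ : Matrix m m ℂ),
      traceNorm (Φ (l ++ [ξ]) ρ₁ - Φt ξ ρ₂) ≤
        traceMapNorm (Φt ξ) * (d₁ * traceNorm ρ₁ + traceNorm (ρ₁ - ρ₂))) ∧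
    (∀ (η ξl : List σ) (ρhat : Matrix m m ℂ), ρhat.PosSemidef → ρhat.trace = 1 →
      traceNorm (chain Φ η ξl ρhat - tchain Φt ξl ρhat) ≤
        (d₁ / ((d₂ - d₁)⁻¹ - 1)) * (d₂ - d₁) ^ (-(ξl.length : ℝ) - 1) *
          ((chain Φ η ξl ρhat).trace).re) := by
  have hd0 : 0 < d₂ - d₁ := sub_pos.mpr hd₁₂
  have hstep l ξ := traceNorm_apply_sub_apply_le (Φ (l ++ [ξ])) (Φt ξ) (hi l ξ)
  refine ⟨hstep, fun η ξl ρ hρ _ => ?_⟩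
  have hlow l ξ (ρ : Matrix m m ℂ) (hρ : ρ.PosSemidef) :=
    sub_mul_re_trace_le_re_trace_apply (Φ (l ++ [ξ])) (Φt ξ) (hi l ξ) (hii ξ) hρ
  calc _ ≤ comparisonCoeff d₁ (d₂ - d₁) ξl.length * (chain Φ η ξl ρ).trace.re :=
        traceNorm_chain_sub_tchain_le Φ Φt hCP _ (fun ξ => traceMapNorm_nonneg _) hd₁0 hd0 hdlt
          hstep hlow η ξl hρ
    _ ≤ _ := by
        gcongr
        · exact (Complex.nonneg_iff.mp (chain_posSemidef Φ hCP η ξl hρ).trace_nonneg).1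
        · exact comparisonCoeff_le hd₁0 hd0 hdlt _

/-- perturbative comparison of measurement dynamics: under assumptions
(i) `‖Φ^{(k)}_{…,ξ} − Φ̃_ξ‖ ≤ d₁‖Φ̃_ξ‖` and (ii) `Tr(Φ̃_ξ[ρ]) ≥ d₂‖Φ̃_ξ‖` for density
matrices `ρ`, with `0 ≤ d₁ < d₂ ≤ 1` and `d := d₂ − d₁ < 1`, one has the one-step
estimate `‖Φ^{(n)}[ρ₁] − Φ̃_{ξ_n}[ρ₂]‖ ≤ ‖Φ̃_{ξ_n}‖ (d₁‖ρ₁‖ + ‖ρ₁ − ρ₂‖)` and, by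
iteration, for any density matrix `ρ̂` and any length-`r` protocol segment,
`‖Φ^{(k+r)}∘⋯∘Φ^{(k+1)}[ρ̂] − Φ̃_{ξ_r}∘⋯∘Φ̃_{ξ_1}[ρ̂]‖
  ≤ (d₁/(d⁻¹−1)) d^{−r−1} Tr(Φ^{(k+r)}∘⋯∘Φ^{(k+1)}[ρ̂])`. -/
theorem perturbative_comparison {σ m : Type*} [Fintype m] [DecidableEq m]
    (Φ : List σ → (Matrix m m ℂ →ₗ[ℂ] Matrix m m ℂ))
    (Φt : σ → (Matrix m m ℂ →ₗ[ℂ] Matrix m m ℂ))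
    (hCP : ∀ l, IsCompletelyPositive (Φ l)) (hCPt : ∀ ξ, IsCompletelyPositive (Φt ξ))
    (htni : ∀ (l : List σ) (ρ : Matrix m m ℂ), ρ.PosSemidef →
      ((Φ l ρ).trace).re ≤ (ρ.trace).re)
    (htnit : ∀ (ξ : σ) (ρ : Matrix m m ℂ), ρ.PosSemidef →
      ((Φt ξ ρ).trace).re ≤ (ρ.trace).re)
    (d₁ d₂ : ℝ) (hd₁0 : 0 ≤ d₁) (hd₁₂ : d₁ < d₂) (hd₂1 : d₂ ≤ 1)
    (hdlt : d₂ - d₁ < 1)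
    (hi : ∀ (l : List σ) (ξ : σ),
      traceMapNorm (Φ (l ++ [ξ]) - Φt ξ) ≤ d₁ * traceMapNorm (Φt ξ))
    (hii : ∀ (ξ : σ) (ρ : Matrix m m ℂ), ρ.PosSemidef → ρ.trace = 1 →
      d₂ * traceMapNorm (Φt ξ) ≤ ((Φt ξ ρ).trace).re) :
    (∀ (l : List σ) (ξ : σ) (ρ₁ ρ₂ : Matrix m m ℂ),
      traceNorm (Φ (l ++ [ξ]) ρ₁ - Φt ξ ρ₂) ≤
        traceMapNorm (Φt ξ) * (d₁ * traceNorm ρ₁ + traceNorm (ρ₁ - ρ₂))) ∧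
    (∀ (η ξl : List σ) (ρhat : Matrix m m ℂ), ρhat.PosSemidef → ρhat.trace = 1 →
      traceNorm (chain Φ η ξl ρhat - tchain Φt ξl ρhat) ≤
        (d₁ / ((d₂ - d₁)⁻¹ - 1)) * (d₂ - d₁) ^ (-(ξl.length : ℝ) - 1) *
          ((chain Φ η ξl ρhat).trace).re) :=
  perturbative_comparison_general Φ Φt hCP d₁ d₂ hd₁0 hd₁₂ hdlt hi hii
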